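/- arXiv:1612.05273 — 5 statements merged into one kernel-verified Lean document; each statement's English description precedes it below -/
import Mathlib

section
/- In every Heyting algebra, for all elements x and y, if □x ≤ ((z → x) → z) → z holds for all z (where □ is a unary operation), then □x ≤ y ∨ (y → x). -/
/-! Instantiate Kuznetsov's axiom at `z := y ⊔ (y ⇨ x)`: since `z ⇨ x ≤ y ⇨ x ≤ z`, the antecedent
`(z ⇨ x) ⇨ z` is `⊤`, and the axiom collapses to `□x ≤ z`. -/

section HeytingAlgebra

variable {α : Type*} [HeytingAlgebra α] {a b : α}

theorem himp_himp_himp_eq_of_himp_le (h : a ⇨ b ≤ a) : ((a ⇨ b) ⇨ a) ⇨ a = a := by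
  rw [himp_eq_top_iff.mpr h, top_himp]

theorem sup_himp_himp_le (a b : α) : a ⊔ (a ⇨ b) ⇨ b ≤ a ⊔ (a ⇨ b) :=
  (himp_le_himp_right le_sup_left).trans le_sup_right

end HeytingAlgebra

theorem stmt_2 {H : Type*} [HeytingAlgebra H] (box : H → H)
    (h : ∀ x z : H, box x ≤ ((z ⇨ x) ⇨ z) ⇨ z) :
    ∀ x y : H, box x ≤ y ⊔ (y ⇨ x) := by
  intro x y
  simpa only [himp_himp_himp_eq_of_himp_le (sup_himp_himp_le y x)] using h x (y ⊔ (y ⇨ x))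
end

section
/- Let P(p,q) := ((p → q) → p) → p. Then in every Heyting algebra, (P(p,q) → q) = q; that is, ((((p → q) → p) → p) → q) = q for all elements p, q. -/
/-! The Peirce element `P = ((p ⇨ q) ⇨ p) ⇨ p` lies above both `p` and `p ⇨ q`. Since `⇨` is
antitone in its first argument, `P ⇨ q ≤ p ⇨ q ≤ P`, and an implication `a ⇨ b` that lies below its
own antecedent `a` equals its consequent `b`. -/

theorem himp_eq_right_of_himp_le {α : Type*} [HeytingAlgebra α] {a b : α} (h : a ⇨ b ≤ a) :
    a ⇨ b = b :=
  le_antisymm (calc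
    a ⇨ b = (a ⇨ b) ⊓ a := (inf_eq_left.2 h).symm
    _ ≤ b := himp_inf_le) le_himp

theorem stmt_7 {H : Type*} [HeytingAlgebra H] (p q : H) :
    ((((p ⇨ q) ⇨ p) ⇨ p) ⇨ q) = q := by
  apply himp_eq_right_of_himp_le
  calc (((p ⇨ q) ⇨ p) ⇨ p) ⇨ q ≤ p ⇨ q := himp_le_himp_right le_himp
    _ ≤ ((p ⇨ q) ⇨ p) ⇨ p := le_himp_himp
end

section
/- Let B be a Boolean algebra with a unary operation □ satisfying □1 = 1, □(x ∧ y) = □x ∧ □y, and □x ≤ □□x. Then its doubleton B* (operations componentwise on B × 2 except □(x,y) = (□x, z) with z = 1 iff x = 1) satisfies □a ≤ □□a for all a ∈ B*. -/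
theorem stmt_12_general {B : Type*} [BooleanAlgebra B] (box : B → B)
    (h1 : box ⊤ = ⊤)
    (h3 : ∀ x : B, box x ≤ box (box x))
    (boxD : B × Bool → B × Bool)
    (hD : ∀ a : B × Bool, (boxD a).1 = box a.1 ∧ ((boxD a).2 = ⊤ ↔ a.1 = ⊤)) :
    ∀ a : B × Bool, boxD a ≤ boxD (boxD a) := by
  intro a
  obtain ⟨hfst, hsnd⟩ := hD a
  obtain ⟨hfst', hsnd'⟩ := hD (boxD a)
  refine Prod.le_def.2 ⟨?_, Bool.le_iff_imp.2 fun htop => ?_⟩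
  · rw [hfst', hfst]
    exact h3 a.1
  · -- The flag of `□a` is set only when `a.1 = ⊤`, and then `(□a).1 = □⊤ = ⊤` as well.
    have ha : a.1 = ⊤ := hsnd.1 htop
    exact hsnd'.2 (by rw [hfst, ha, h1])

theorem stmt_12 {B : Type*} [BooleanAlgebra B] (box : B → B)
    (h1 : box ⊤ = ⊤) (h2 : ∀ x y : B, box (x ⊓ y) = box x ⊓ box y)
    (h3 : ∀ x : B, box x ≤ box (box x))
    (boxD : B × Bool → B × Bool)
    (hD : ∀ a : B × Bool, (boxD a).1 = box a.1 ∧ ((boxD a).2 = ⊤ ↔ a.1 = ⊤)) :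
    ∀ a : B × Bool, boxD a ≤ boxD (boxD a) :=
  stmt_12_general box h1 h3 boxD hD
end

section
/- Let B be a K4.Grz-algebra: a Boolean algebra with unary □ satisfying □1 = 1, □(x ∧ y) = □x ∧ □y, □x ≤ □□x, and □(□(x ⇒ □x) ⇒ x) ≤ □x, where x ⇒ y := ¬x ∨ y. Then the doubleton B* of B (carrier B × 2, Boolean operations componentwise, □(x,y) = (□x, z) with z = 1 iff x = 1) is also a K4.Grz-algebra; in particular it satisfies □(□(a ⇒ □a) ⇒ a) ≤ □a for all a ∈ B*. -/
theorem stmt_13 {B : Type*} [BooleanAlgebra B] (box : B → B)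
    (h1 : box ⊤ = ⊤) (h2 : ∀ x y : B, box (x ⊓ y) = box x ⊓ box y)
    (h3 : ∀ x : B, box x ≤ box (box x))
    (h4 : ∀ x : B, box ((box (xᶜ ⊔ box x))ᶜ ⊔ x) ≤ box x)
    (boxD : B × Bool → B × Bool)
    (hD : ∀ a : B × Bool, (boxD a).1 = box a.1 ∧ ((boxD a).2 = ⊤ ↔ a.1 = ⊤)) :
    boxD ⊤ = ⊤ ∧ (∀ a b : B × Bool, boxD (a ⊓ b) = boxD a ⊓ boxD b) ∧
    (∀ a : B × Bool, boxD a ≤ boxD (boxD a)) ∧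
    (∀ a : B × Bool, boxD ((boxD (aᶜ ⊔ boxD a))ᶜ ⊔ a) ≤ boxD a) := by
  have hx1 : ∀ a : B × Bool, (boxD a).1 = box a.1 := fun a => (hD a).1
  have hx2 : ∀ a : B × Bool, ((boxD a).2 = true ↔ a.1 = ⊤) := fun a => (hD a).2
  have boolext : ∀ p q : Bool, (p = true ↔ q = true) → p = q := by decide
  have boolle : ∀ p q : Bool, (p = true → q = true) → p ≤ q := by decide
  -- key lemma: if box (xᶜ ⊔ box x) ≤ x then x = ⊤
  have key : ∀ x : B, box (xᶜ ⊔ box x) ≤ x → x = ⊤ := by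
    intro x hle
    have h5 : (box (xᶜ ⊔ box x))ᶜ ⊔ x = ⊤ := by
      rw [sup_comm, ← himp_eq]
      exact himp_eq_top_iff.mpr hle
    have hbx : box x = ⊤ := by
      have := h4 x
      rw [h5, h1] at this
      exact top_le_iff.mp this
    have hx : xᶜ ⊔ box x = ⊤ := by rw [hbx]; simp
    rw [hx, h1] at hle
    exact top_le_iff.mp hle
  refine ⟨?_, ?_, ?_, ?_⟩
  · have hfst : (boxD (⊤ : B × Bool)).1 = ⊤ := by
      rw [hx1]
      show box (⊤ : B) = ⊤
      exact h1
    have hsnd : (boxD (⊤ : B × Bool)).2 = true := (hx2 ⊤).mpr rfl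
    exact Prod.ext hfst (by rw [hsnd]; rfl)
  · intro a b
    refine Prod.ext ?_ ?_
    · show (boxD (a ⊓ b)).1 = (boxD a).1 ⊓ (boxD b).1
      rw [hx1, hx1, hx1]
      show box (a.1 ⊓ b.1) = _
      exact h2 a.1 b.1
    · show (boxD (a ⊓ b)).2 = ((boxD a).2 && (boxD b).2)
      refine boolext _ _ ?_
      rw [Bool.and_eq_true, hx2, hx2, hx2]
      show a.1 ⊓ b.1 = ⊤ ↔ _
      exact inf_eq_top_iff
  · intro a
    refine Prod.le_def.mpr ⟨?_, ?_⟩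
    · simp only [hx1]; exact h3 a.1
    · refine boolle _ _ ?_
      intro h
      refine (hx2 (boxD a)).mpr ?_
      rw [hx1, (hx2 a).mp h, h1]
  · intro a
    set u := aᶜ ⊔ boxD a with hu
    set v := (boxD u)ᶜ ⊔ a with hv
    have hu1 : u.1 = a.1ᶜ ⊔ box a.1 := by
      show a.1ᶜ ⊔ (boxD a).1 = _
      rw [hx1]
    have hv1 : v.1 = (box (a.1ᶜ ⊔ box a.1))ᶜ ⊔ a.1 := by
      show ((boxD u).1)ᶜ ⊔ a.1 = _
      rw [hx1, hu1]
    refine Prod.le_def.mpr ⟨?_, ?_⟩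
    · simp only [hx1]
      rw [hv1]
      exact h4 a.1
    · refine boolle _ _ ?_
      intro h
      have hvtop := (hx2 v).mp h
      rw [hv1] at hvtop
      have hle : box (a.1ᶜ ⊔ box a.1) ≤ a.1 := by
        rw [sup_comm, ← himp_eq] at hvtop
        exact himp_eq_top_iff.mp hvtop
      exact (hx2 a).mpr (key a.1 hle)
end

section
/- If the variety of K4.Grz-algebras is closed under the doubleton construction, then the rule □α / α is admissible in K4.Grz in the algebraic sense: if a formula α (in the language of Boolean algebras with □) is refuted in some K4.Grz-algebra under some valuation, then □α is refuted in the doubleton of that algebra under the valuation p ↦ (v(p), 1). Formally: for any K4.Grz-algebra A, valuation v on A, and formula α with interpretation ⟦α⟧_v ≠ 1 in A, the interpretation of □α in the doubleton A* under the valuation p ↦ (v(p), 1) is not equal to (1,1). -/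
inductive MFormula where
  | var : ℕ → MFormula
  | and : MFormula → MFormula → MFormula
  | or : MFormula → MFormula → MFormula
  | not : MFormula → MFormula
  | box : MFormula → MFormula

def MFormula.eval {B : Type*} [BooleanAlgebra B] (bx : B → B) (v : ℕ → B) :
    MFormula → B
  | .var p => v p
  | .and α β => α.eval bx v ⊓ β.eval bx v
  | .or α β => α.eval bx v ⊔ β.eval bx v
  | .not α => (α.eval bx v)ᶜ
  | .box α => bx (α.eval bx v)

theorem MFormula.eval_fst {B C : Type*} [BooleanAlgebra B] [BooleanAlgebra C] {box : B → B}
    {boxD : B × C → B × C} (hD : ∀ a, (boxD a).1 = box a.1) (w : ℕ → B × C) (α : MFormula) :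
    (α.eval boxD w).1 = α.eval box (Prod.fst ∘ w) := by
  induction α with
  | var p => rfl
  | and α β ihα ihβ => simp only [MFormula.eval, Prod.fst_inf, ihα, ihβ]
  | or α β ihα ihβ => simp only [MFormula.eval, Prod.fst_sup, ihα, ihβ]
  | not α ih => exact congrArg compl ih
  | box α ih => simp only [MFormula.eval, hD, ih]

theorem stmt_14_general {B : Type*} [BooleanAlgebra B] (box : B → B)
    (boxD : B × Bool → B × Bool)
    (hD : ∀ a : B × Bool, (boxD a).1 = box a.1 ∧ ((boxD a).2 = ⊤ ↔ a.1 = ⊤))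
    (v : ℕ → B) (α : MFormula) (hα : α.eval box v ≠ ⊤) :
    (MFormula.box α).eval boxD (fun p => (v p, ⊤)) ≠ ⊤ := by
  intro hbox
  have hsnd : (boxD (α.eval boxD fun p => (v p, ⊤))).2 = ⊤ := congrArg Prod.snd hbox
  have hfst := (hD _).2.mp hsnd
  rw [MFormula.eval_fst (fun a => (hD a).1)] at hfst
  exact hα hfst

theorem stmt_14 {B : Type*} [BooleanAlgebra B] (box : B → B)
    (h1 : box ⊤ = ⊤) (h2 : ∀ x y : B, box (x ⊓ y) = box x ⊓ box y)
    (h3 : ∀ x : B, box x ≤ box (box x))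
    (h4 : ∀ x : B, box ((box (xᶜ ⊔ box x))ᶜ ⊔ x) ≤ box x)
    (boxD : B × Bool → B × Bool)
    (hD : ∀ a : B × Bool, (boxD a).1 = box a.1 ∧ ((boxD a).2 = ⊤ ↔ a.1 = ⊤))
    (v : ℕ → B) (α : MFormula) (hα : α.eval box v ≠ ⊤) :
    (MFormula.box α).eval boxD (fun p => (v p, ⊤)) ≠ ⊤ :=
  stmt_14_general box boxD hD v α hα
end
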